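/- For every integer n ≥ 5, the subsets A = {0, 1, 2, n−2, n+1} and B = {0, 1, 3, n−1, n} of ℤ_{2n} (elements taken modulo 2n) are Z-related: they are homometric (iv(A) = iv(B)) but not dihedrally equivalent (for every t ∈ ℤ_{2n}, B ≠ {a + t : a ∈ A} and B ≠ {−a + t : a ∈ A}). -/
import Mathlib

set_option maxHeartbeats 2000000

/-- The interval vector of a finite subset `A` of `ℤ_M`:
`iv A n = #{(a, b) ∈ A × A : b - a = n}`. -/
def iv {M : ℕ} (A : Finset (ZMod M)) (n : ZMod M) : ℕ :=
  ((A ×ˢ A).filter (fun p => p.2 - p.1 = n)).card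

/-- The set `{0, 1, 2, n−2, n+1}` viewed in `ℤ_{2n}`. -/
def setA (n : ℕ) : Finset (ZMod (2 * n)) :=
  {((0 : ℕ) : ZMod (2 * n)), ((1 : ℕ) : ZMod (2 * n)), ((2 : ℕ) : ZMod (2 * n)),
    ((n - 2 : ℕ) : ZMod (2 * n)), ((n + 1 : ℕ) : ZMod (2 * n))}

/-- The set `{0, 1, 3, n−1, n}` viewed in `ℤ_{2n}`. -/
def setB (n : ℕ) : Finset (ZMod (2 * n)) :=
  {((0 : ℕ) : ZMod (2 * n)), ((1 : ℕ) : ZMod (2 * n)), ((3 : ℕ) : ZMod (2 * n)),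
    ((n - 1 : ℕ) : ZMod (2 * n)), ((n : ℕ) : ZMod (2 * n))}

lemma iv_eq_count {M : ℕ} (A : Finset (ZMod M)) (d : ZMod M) :
    iv A d = Multiset.count d ((A ×ˢ A).val.map (fun p => p.2 - p.1)) := by
  rw [iv, Multiset.count_map]
  simp only [eq_comm]
  rfl

lemma natCast_ne_natCast {M a b : ℕ} (ha : a < M) (hb : b < M) (hab : a ≠ b) :
    (a : ZMod M) ≠ (b : ZMod M) := by
  haveI : NeZero M := ⟨by omega⟩
  intro h
  have := congrArg ZMod.val h
  rw [ZMod.val_cast_of_lt ha, ZMod.val_cast_of_lt hb] at this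
  exact hab this

lemma not_in_setB {n v : ℕ} (hn : 5 ≤ n) (hv : v < 2*n) (h0 : v ≠ 0) (h1 : v ≠ 1)
    (h3 : v ≠ 3) (h4 : v ≠ n - 1) (h5 : v ≠ n) : ((v : ℕ) : ZMod (2*n)) ∉ setB n := by
  simp only [setB, Finset.mem_insert, Finset.mem_singleton]
  push_neg
  refine ⟨?_, ?_, ?_, ?_, ?_⟩ <;>
    exact natCast_ne_natCast (by omega) (by omega) (by omega)

/-- For `n ≥ 5`, the sets `{0, 1, 2, n−2, n+1}` and `{0, 1, 3, n−1, n}` are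
Z-related in `ℤ_{2n}`: homometric but not dihedrally equivalent. -/
theorem zrelated_family_two (n : ℕ) (hn : 5 ≤ n) :
    iv (setA n) = iv (setB n) ∧
    ∀ t : ZMod (2 * n),
      setB n ≠ (setA n).image (fun a => a + t) ∧
      setB n ≠ (setA n).image (fun a => -a + t) := by
  have hp : ((n - 2 : ℕ) : ZMod (2 * n)) = (n : ZMod (2 * n)) - 2 := by
    rw [Nat.cast_sub (by omega : 2 ≤ n)]; norm_num
  have hq : ((n + 1 : ℕ) : ZMod (2 * n)) = (n : ZMod (2 * n)) + 1 := by push_cast; ring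
  have hr : ((n - 1 : ℕ) : ZMod (2 * n)) = (n : ZMod (2 * n)) - 1 := by
    rw [Nat.cast_sub (by omega : 1 ≤ n)]; norm_num
  have hK2 : 2 * (n : ZMod (2*n)) = 0 := by
    have : ((2*n : ℕ) : ZMod (2*n)) = 0 := ZMod.natCast_self _
    push_cast at this; linear_combination this
  set K : ZMod (2 * n) := (n : ZMod (2 * n)) with hKdef
  have hAval : (setA n).val = 0 ::ₘ 1 ::ₘ 2 ::ₘ (K - 2) ::ₘ (K + 1) ::ₘ 0 := by
    rw [setA]
    rw [Finset.insert_val_of_notMem (by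
      simp only [Finset.mem_insert, Finset.mem_singleton]; push_neg
      exact ⟨natCast_ne_natCast (by omega) (by omega) (by omega),
        natCast_ne_natCast (by omega) (by omega) (by omega),
        natCast_ne_natCast (by omega) (by omega) (by omega),
        natCast_ne_natCast (by omega) (by omega) (by omega)⟩)]
    rw [Finset.insert_val_of_notMem (by
      simp only [Finset.mem_insert, Finset.mem_singleton]; push_neg
      exact ⟨natCast_ne_natCast (by omega) (by omega) (by omega),
        natCast_ne_natCast (by omega) (by omega) (by omega),
        natCast_ne_natCast (by omega) (by omega) (by omega)⟩)]
    rw [Finset.insert_val_of_notMem (by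
      simp only [Finset.mem_insert, Finset.mem_singleton]; push_neg
      exact ⟨natCast_ne_natCast (by omega) (by omega) (by omega),
        natCast_ne_natCast (by omega) (by omega) (by omega)⟩)]
    rw [Finset.insert_val_of_notMem (by
      simp only [Finset.mem_singleton]
      exact natCast_ne_natCast (by omega) (by omega) (by omega))]
    rw [Finset.singleton_val, hp, hq, Nat.cast_zero, Nat.cast_one, Nat.cast_ofNat]
    rfl
  have hBval : (setB n).val = 0 ::ₘ 1 ::ₘ 3 ::ₘ (K - 1) ::ₘ K ::ₘ 0 := by
    rw [setB]
    rw [Finset.insert_val_of_notMem (by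
      simp only [Finset.mem_insert, Finset.mem_singleton]; push_neg
      exact ⟨natCast_ne_natCast (by omega) (by omega) (by omega),
        natCast_ne_natCast (by omega) (by omega) (by omega),
        natCast_ne_natCast (by omega) (by omega) (by omega),
        natCast_ne_natCast (by omega) (by omega) (by omega)⟩)]
    rw [Finset.insert_val_of_notMem (by
      simp only [Finset.mem_insert, Finset.mem_singleton]; push_neg
      exact ⟨natCast_ne_natCast (by omega) (by omega) (by omega),
        natCast_ne_natCast (by omega) (by omega) (by omega),
        natCast_ne_natCast (by omega) (by omega) (by omega)⟩)]
    rw [Finset.insert_val_of_notMem (by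
      simp only [Finset.mem_insert, Finset.mem_singleton]; push_neg
      exact ⟨natCast_ne_natCast (by omega) (by omega) (by omega),
        natCast_ne_natCast (by omega) (by omega) (by omega)⟩)]
    rw [Finset.insert_val_of_notMem (by
      simp only [Finset.mem_singleton]
      exact natCast_ne_natCast (by omega) (by omega) (by omega))]
    rw [Finset.singleton_val, hr, Nat.cast_zero, Nat.cast_one, Nat.cast_ofNat]
    rfl
  constructor
  · -- homometric
    funext d
    rw [iv_eq_count, iv_eq_count]
    congr 1
    rw [Finset.product_val, Finset.product_val, hAval, hBval]
    simp only [Multiset.cons_product, Multiset.zero_product, Multiset.map_cons,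
      Multiset.map_add, Multiset.map_zero, add_zero, Multiset.map_map, Function.comp,
      sub_self, sub_zero,
      show (0:ZMod (2*n)) - 1 = -1 by ring,
      show (2:ZMod (2*n)) - 1 = 1 by ring,
      show (K-2) - 1 = K - 3 by ring,
      show (K+1) - 1 = K by ring,
      show (0:ZMod (2*n)) - 2 = -2 by ring,
      show (1:ZMod (2*n)) - 2 = -1 by ring,
      show (K-2) - 2 = K - 4 by ring,
      show (K+1) - 2 = K - 1 by ring,
      show (0:ZMod (2*n)) - (K-2) = K+2 by linear_combination -hK2,
      show (1:ZMod (2*n)) - (K-2) = K+3 by linear_combination -hK2,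
      show (2:ZMod (2*n)) - (K-2) = K+4 by linear_combination -hK2,
      show (K+1) - (K-2) = 3 by ring,
      show (0:ZMod (2*n)) - (K+1) = K-1 by linear_combination -hK2,
      show (1:ZMod (2*n)) - (K+1) = K by linear_combination -hK2,
      show (2:ZMod (2*n)) - (K+1) = K+1 by linear_combination -hK2,
      show (K-2) - (K+1) = -3 by ring,
      show (3:ZMod (2*n)) - 1 = 2 by ring,
      show (K-1) - 1 = K - 2 by ring,
      show (0:ZMod (2*n)) - 3 = -3 by ring,
      show (1:ZMod (2*n)) - 3 = -2 by ring,
      show (K-1) - 3 = K - 4 by ring,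
      show (0:ZMod (2*n)) - (K-1) = K+1 by linear_combination -hK2,
      show (1:ZMod (2*n)) - (K-1) = K+2 by linear_combination -hK2,
      show (3:ZMod (2*n)) - (K-1) = K+4 by linear_combination -hK2,
      show K - (K-1) = 1 by ring,
      show (0:ZMod (2*n)) - K = K by linear_combination -hK2,
      show (1:ZMod (2*n)) - K = K+1 by linear_combination -hK2,
      show (3:ZMod (2*n)) - K = K+3 by linear_combination -hK2,
      show (K-1) - K = -1 by ring]
    simp only [← Multiset.singleton_add]
    abel
  · -- not dihedrally equivalent
    intro t
    constructor
    · intro heq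
      have h0B : ((0:ℕ) : ZMod (2*n)) ∈ setB n := by
        simp only [setB, Finset.mem_insert]; tauto
      rw [heq, Finset.mem_image] at h0B
      obtain ⟨a, ha, hat⟩ := h0B
      simp only [setA, Finset.mem_insert, Finset.mem_singleton] at ha
      have hmem : ∀ w : ZMod (2*n), w ∈ setA n → ∀ v : ℕ, w + t = (v : ZMod (2*n)) →
          ((v : ℕ) : ZMod (2*n)) ∈ setB n := by
        intro w hw v hv
        rw [heq, Finset.mem_image]
        exact ⟨w, hw, hv⟩
      rcases ha with rfl | rfl | rfl | rfl | rfl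
      · -- t = 0, witness 2
        push_cast at hat
        refine not_in_setB hn (v := 2) (by omega) (by omega) (by omega) (by omega)
          (by omega) (by omega) ?_
        refine hmem (((2:ℕ) : ZMod (2*n))) (by simp [setA]) 2 ?_
        push_cast
        linear_combination hat
      · -- t = -1, witness 0 ↦ 2n-1
        push_cast at hat
        refine not_in_setB hn (v := 2*n-1) (by omega) (by omega) (by omega) (by omega)
          (by omega) (by omega) ?_
        refine hmem (((0:ℕ) : ZMod (2*n))) (by simp [setA]) (2*n-1) ?_
        push_cast [Nat.cast_sub (show 1 ≤ 2*n by omega)]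
        linear_combination hat - hK2
      · -- t = -2, witness 0 ↦ 2n-2
        push_cast at hat
        refine not_in_setB hn (v := 2*n-2) (by omega) (by omega) (by omega) (by omega)
          (by omega) (by omega) ?_
        refine hmem (((0:ℕ) : ZMod (2*n))) (by simp [setA]) (2*n-2) ?_
        push_cast [Nat.cast_sub (show 2 ≤ 2*n by omega)]
        linear_combination hat - hK2
      · -- t = 2-n, witness 0 ↦ n+2
        rw [hp] at hat
        refine not_in_setB hn (v := n+2) (by omega) (by omega) (by omega) (by omega)
          (by omega) (by omega) ?_
        refine hmem (((0:ℕ) : ZMod (2*n))) (by simp [setA]) (n+2) ?_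
        push_cast
        linear_combination hat - hK2
      · -- t = -n-1, witness 2 ↦ n+1
        rw [hq] at hat
        refine not_in_setB hn (v := n+1) (by omega) (by omega) (by omega) (by omega)
          (by omega) (by omega) ?_
        refine hmem (((2:ℕ) : ZMod (2*n))) (by simp [setA]) (n+1) ?_
        push_cast
        linear_combination hat - hK2
    · intro heq
      have h0B : ((0:ℕ) : ZMod (2*n)) ∈ setB n := by
        simp only [setB, Finset.mem_insert]; tauto
      rw [heq, Finset.mem_image] at h0B
      obtain ⟨a, ha, hat⟩ := h0B
      simp only [setA, Finset.mem_insert, Finset.mem_singleton] at ha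
      have hmem : ∀ w : ZMod (2*n), w ∈ setA n → ∀ v : ℕ, -w + t = (v : ZMod (2*n)) →
          ((v : ℕ) : ZMod (2*n)) ∈ setB n := by
        intro w hw v hv
        rw [heq, Finset.mem_image]
        exact ⟨w, hw, hv⟩
      rcases ha with rfl | rfl | rfl | rfl | rfl
      · -- t = 0, witness 1 ↦ 2n-1
        push_cast at hat
        refine not_in_setB hn (v := 2*n-1) (by omega) (by omega) (by omega) (by omega)
          (by omega) (by omega) ?_
        refine hmem (((1:ℕ) : ZMod (2*n))) (by simp [setA]) (2*n-1) ?_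
        push_cast [Nat.cast_sub (show 1 ≤ 2*n by omega)]
        linear_combination hat - hK2
      · -- t = 1, witness 2 ↦ 2n-1
        push_cast at hat
        refine not_in_setB hn (v := 2*n-1) (by omega) (by omega) (by omega) (by omega)
          (by omega) (by omega) ?_
        refine hmem (((2:ℕ) : ZMod (2*n))) (by simp [setA]) (2*n-1) ?_
        push_cast [Nat.cast_sub (show 1 ≤ 2*n by omega)]
        linear_combination hat - hK2
      · -- t = 2, witness 0 ↦ 2
        push_cast at hat
        refine not_in_setB hn (v := 2) (by omega) (by omega) (by omega) (by omega)
          (by omega) (by omega) ?_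
        refine hmem (((0:ℕ) : ZMod (2*n))) (by simp [setA]) 2 ?_
        push_cast
        linear_combination hat
      · -- t = n-2, witness n+1 ↦ 2n-3
        rw [hp] at hat
        refine not_in_setB hn (v := 2*n-3) (by omega) (by omega) (by omega) (by omega)
          (by omega) (by omega) ?_
        refine hmem (((n+1:ℕ) : ZMod (2*n))) (by simp [setA]) (2*n-3) ?_
        push_cast [Nat.cast_sub (show 3 ≤ 2*n by omega)]
        linear_combination hat - hK2
      · -- t = n+1, witness 0 ↦ n+1
        rw [hq] at hat
        refine not_in_setB hn (v := n+1) (by omega) (by omega) (by omega) (by omega)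
          (by omega) (by omega) ?_
        refine hmem (((0:ℕ) : ZMod (2*n))) (by simp [setA]) (n+1) ?_
        push_cast
        linear_combination hat
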